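/- arXiv:2507.22646 — 5 statements merged into one kernel-verified Lean document; each statement's English description precedes it below -/
import Mathlib

section
/- Let a, b, c be real numbers with b ≠ 2a², and set η := (3/5)(4a² − b), μ := c(b − 2a²), ν := 8a⁶ − 3a⁴b − (2/3)c². Then ς := 2a² satisfies 5η − 3ς = −3(b − 2a²) ≠ 0 and is a solution of the quintic equation P(ς; η, μ, ν) = 0. -/
/-- The quintic function P(ς; η, μ, ν) := ν + (1/2)ς³ − (5/4)ης² + 6μ²/(5η − 3ς)². -/
noncomputable def Pquintic (ς η μ ν : ℝ) : ℝ :=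
  ν + (1/2) * ς^3 - (5/4) * η * ς^2 + 6 * μ^2 / (5*η - 3*ς)^2

/-! With ς = 2a² the pole factor is 5η − 3ς = −3(b − 2a²), of which μ = c(b − 2a²) is the multiple
−c/3, so the rational term of P is the constant (2/3)c², which cancels the −(2/3)c² in ν; the remaining
polynomial part 8a⁶ − 3a⁴b + 4a⁶ − 3(4a² − b)a⁴ vanishes identically. -/

theorem Pquintic_of_eq_mul {ς η μ ν m : ℝ} (hpole : 5*η - 3*ς ≠ 0) (hμ : μ = m * (5*η - 3*ς)) :
    Pquintic ς η μ ν = ν + (1/2) * ς^3 - (5/4) * η * ς^2 + 6 * m^2 := by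
  rw [Pquintic, hμ, mul_pow, ← mul_assoc, mul_div_assoc, div_self (pow_ne_zero 2 hpole), mul_one]

/-- For real a, b, c with b ≠ 2a², setting η = (3/5)(4a² − b), μ = c(b − 2a²),
ν = 8a⁶ − 3a⁴b − (2/3)c², the value ς = 2a² satisfies 5η − 3ς = −3(b − 2a²) ≠ 0 and
solves the quintic P(ς; η, μ, ν) = 0. -/
theorem stmt_1 (a b c : ℝ) (h : b ≠ 2*a^2) :
    5 * ((3/5)*(4*a^2 - b)) - 3 * (2*a^2) = -3*(b - 2*a^2) ∧
    -3*(b - 2*a^2) ≠ 0 ∧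
    Pquintic (2*a^2) ((3/5)*(4*a^2 - b)) (c*(b - 2*a^2)) (8*a^6 - 3*a^4*b - (2/3)*c^2) = 0 := by
  have hpole : 5 * ((3/5)*(4*a^2 - b)) - 3 * (2*a^2) = -3*(b - 2*a^2) := by ring
  have hpole_ne : -3*(b - 2*a^2) ≠ 0 := mul_ne_zero (by norm_num) (sub_ne_zero.mpr h)
  refine ⟨hpole, hpole_ne, ?_⟩
  rw [Pquintic_of_eq_mul (m := -c/3) (hpole ▸ hpole_ne) (by rw [hpole]; ring)]
  ring
end

section
/- Let (a, b, c) be a point of the region R, i.e. 0 < b, 0 ≤ c < b^{3/2}/√6, and z₀(b,c) < a < z₊(b,c), where z₋(b,c) < z₀(b,c) < z₊(b,c) are the three real roots of z³ − (b/2)z + c/3 = 0. Then b − 2a² > 0. Consequently, with η := (3/5)(4a² − b) and ς := 2a², one has ς > (5/3)η and ς > 0, i.e. ς > max{(5/3)η, 0}. -/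
/-- For (a,b,c) in the region R (0 < b, 0 ≤ c < b^{3/2}/√6, and z₀ < a < z₊ where
z₋ < z₀ < z₊ are the three real roots of z³ − (b/2)z + c/3 = 0), one has b − 2a² > 0;
consequently, with η = (3/5)(4a² − b) and ς = 2a², ς > max{(5/3)η, 0}. -/
theorem stmt_3 (a b c zm z0 zp : ℝ)
    (hb : 0 < b) (hc0 : 0 ≤ c) (hc : c < b ^ ((3:ℝ)/2) / Real.sqrt 6)
    (hm : zm^3 - (b/2)*zm + c/3 = 0) (h0 : z0^3 - (b/2)*z0 + c/3 = 0)
    (hp : zp^3 - (b/2)*zp + c/3 = 0)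
    (hord1 : zm < z0) (hord2 : z0 < zp)
    (ha1 : z0 < a) (ha2 : a < zp) :
    b - 2*a^2 > 0 ∧ 2*a^2 > max ((5/3) * ((3/5)*(4*a^2 - b))) 0 := by
  -- From pairs of root equations:
  have e1 : (zm - z0) * (zm^2 + zm*z0 + z0^2 - b/2) = 0 := by linear_combination hm - h0
  have e2 : (z0 - zp) * (z0^2 + z0*zp + zp^2 - b/2) = 0 := by linear_combination h0 - hp
  have h1 : zm^2 + zm*z0 + z0^2 - b/2 = 0 := by
    rcases mul_eq_zero.1 e1 with h | h
    · linarith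
    · exact h
  have h2 : z0^2 + z0*zp + zp^2 - b/2 = 0 := by
    rcases mul_eq_zero.1 e2 with h | h
    · linarith
    · exact h
  -- sum of roots is zero
  have hsum : zm + z0 + zp = 0 := by
    have : (zm - zp) * (zm + z0 + zp) = 0 := by linear_combination h1 - h2
    rcases mul_eq_zero.1 this with h | h
    · linarith
    · exact h
  have hzm : zm < 0 := by nlinarith
  have hzp : 0 < zp := by nlinarith
  -- product of roots is -c/3
  have hprod : zm * z0 * zp = -(c/3) := by
    linear_combination h0 + z0*zm*hsum - z0*h1
  -- z0 ≥ 0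
  have hz0 : 0 ≤ z0 := by
    by_contra h
    push_neg at h
    nlinarith [mul_pos (mul_pos (neg_pos.2 hzm) (neg_pos.2 h)) hzp]
  have ha0 : 0 < a := lt_of_le_of_lt hz0 ha1
  -- p(a) = (a - zm)(a - z0)(a - zp) < 0
  have hfac : a^3 - (b/2)*a + c/3 = (a - zm) * (a - z0) * (a - zp) := by
    linear_combination (a^2 - a*(zm+z0)) * hsum + a*h1 + hprod
  have hpa : a^3 - (b/2)*a + c/3 < 0 := by
    rw [hfac]
    have h1' : 0 < a - zm := by linarith
    have h2' : 0 < a - z0 := by linarith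
    have h3' : a - zp < 0 := by linarith
    nlinarith [mul_pos h1' h2']
  have key : b - 2*a^2 > 0 := by nlinarith
  refine ⟨key, ?_⟩
  have : (5:ℝ)/3 * ((3/5)*(4*a^2 - b)) = 4*a^2 - b := by ring
  rw [this]
  exact max_lt (by linarith) (by positivity)
end

section
/- Let (a, b, c) be a point of the region R, i.e. 0 < b, 0 ≤ c < b^{3/2}/√6, and z₀(b,c) < a < z₊(b,c), where z₋(b,c) < z₀(b,c) < z₊(b,c) are the three real roots of z³ − (b/2)z + c/3 = 0. Then both 6a³ − 3ab + 2c < 0 and 6a³ − 3ab − 2c < 0. In particular, the quantities ρ_α := −(8/(9√(3a)))(6a³ − 3ab − 2c) and ρ_β := −(8/(9√(3a)))(6a³ − 3ab + 2c) are strictly positive. -/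
/-- For (a,b,c) in the region R (0 < b, 0 ≤ c < b^{3/2}/√6, and z₀ < a < z₊ where
z₋ < z₀ < z₊ are the three real roots of z³ − (b/2)z + c/3 = 0), one has
6a³ − 3ab + 2c < 0 and 6a³ − 3ab − 2c < 0; in particular the quantities
ρ_α = −(8/(9√(3a)))(6a³ − 3ab − 2c) and ρ_β = −(8/(9√(3a)))(6a³ − 3ab + 2c)
are strictly positive. -/
theorem stmt_4 (a b c zm z0 zp : ℝ)
    (hb : 0 < b) (hc0 : 0 ≤ c) (hc : c < b ^ ((3:ℝ)/2) / Real.sqrt 6)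
    (hm : zm^3 - (b/2)*zm + c/3 = 0) (h0 : z0^3 - (b/2)*z0 + c/3 = 0)
    (hp : zp^3 - (b/2)*zp + c/3 = 0)
    (hord1 : zm < z0) (hord2 : z0 < zp)
    (ha1 : z0 < a) (ha2 : a < zp) :
    6*a^3 - 3*a*b + 2*c < 0 ∧ 6*a^3 - 3*a*b - 2*c < 0 ∧
    0 < -(8/(9*Real.sqrt (3*a))) * (6*a^3 - 3*a*b - 2*c) ∧
    0 < -(8/(9*Real.sqrt (3*a))) * (6*a^3 - 3*a*b + 2*c) := by
  -- From pairs of root equations, derive symmetric function identities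
  have hA : zm^2 + zm*z0 + z0^2 - b/2 = 0 := by
    have hne : zm - z0 ≠ 0 := sub_ne_zero.mpr hord1.ne
    have h : (zm - z0) * (zm^2 + zm*z0 + z0^2 - b/2) = 0 := by linear_combination hm - h0
    exact (mul_eq_zero.mp h).resolve_left hne
  have hB : z0^2 + z0*zp + zp^2 - b/2 = 0 := by
    have hne : z0 - zp ≠ 0 := sub_ne_zero.mpr hord2.ne
    have h : (z0 - zp) * (z0^2 + z0*zp + zp^2 - b/2) = 0 := by linear_combination h0 - hp
    exact (mul_eq_zero.mp h).resolve_left hne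
  have hs : zm + z0 + zp = 0 := by
    have hne : zm - zp ≠ 0 := sub_ne_zero.mpr (hord1.trans hord2).ne
    have h : (zm - zp) * (zm + z0 + zp) = 0 := by linear_combination hA - hB
    exact (mul_eq_zero.mp h).resolve_left hne
  have hprod : c/3 = -(zm*z0*zp) := by
    linear_combination hm - zm*hA + (zm*z0)*hs
  -- sign facts
  have hzm : zm < 0 := by linarith
  have hzp : 0 < zp := by linarith
  have hz0 : 0 ≤ z0 := by
    by_contra hneg
    push_neg at hneg
    nlinarith [mul_pos (mul_pos (neg_pos.mpr hzm) (neg_pos.mpr hneg)) hzp]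
  have ha : 0 < a := lt_of_le_of_lt hz0 ha1
  -- factorizations at a
  have key1 : 6*a^3 - 3*a*b + 2*c = 6*((a - zm)*(a - z0)*(a - zp)) := by
    linear_combination (6*a^2 - 6*a*(zm+z0) + 6*zm*z0)*hs + (6*a - 6*zm)*hA + 6*hm
  have key2 : 6*a^3 - 3*a*b - 2*c = 6*((a + zm)*(a + z0)*(a + zp)) := by
    linear_combination (-(6*a^2) - 6*a*(zm+z0) - 6*zm*z0)*hs + (6*a + 6*zm)*hA + (-6)*hm
  have h1 : 6*a^3 - 3*a*b + 2*c < 0 := by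
    have : (a - zm)*(a - z0)*(a - zp) < 0 :=
      mul_neg_of_pos_of_neg (mul_pos (by linarith) (by linarith)) (by linarith)
    linarith [key1]
  have h2 : 6*a^3 - 3*a*b - 2*c < 0 := by
    have hm' : a + zm < 0 := by linarith
    have : (a + zm)*(a + z0)*(a + zp) < 0 :=
      mul_neg_of_neg_of_pos (mul_neg_of_neg_of_pos hm' (by linarith)) (by linarith)
    linarith [key2]
  have hw : 0 < 8/(9*Real.sqrt (3*a)) := by
    have : 0 < Real.sqrt (3*a) := Real.sqrt_pos.mpr (by linarith)
    positivity
  refine ⟨h1, h2, ?_, ?_⟩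
  · rw [show -(8/(9*Real.sqrt (3*a))) * (6*a^3 - 3*a*b - 2*c)
        = (8/(9*Real.sqrt (3*a))) * (-(6*a^3 - 3*a*b - 2*c)) from by ring]
    exact mul_pos hw (by linarith)
  · rw [show -(8/(9*Real.sqrt (3*a))) * (6*a^3 - 3*a*b + 2*c)
        = (8/(9*Real.sqrt (3*a))) * (-(6*a^3 - 3*a*b + 2*c)) from by ring]
    exact mul_pos hw (by linarith)
end

section
/- Let (a, b, c) be a point of the region R, i.e. 0 < b, 0 ≤ c < b^{3/2}/√6, and z₀(b,c) < a < z₊(b,c), where z₋(b,c) < z₀(b,c) < z₊(b,c) are the three real roots of z³ − (b/2)z + c/3 = 0. Then there is no point (x, y) ∈ ℝ² with y ≠ 0 satisfying simultaneously y² − 3x² + 3a² = 0 and 4x³ − 4xy² − 2bx + (4/3)c = 0. In other words, the hyperbola Γ := {x + iy : y² − 3x² + 3a² = 0, y ≠ 0} and the curve 𝒞 := {x + iy : 4x³ − 4xy² − 2bx + (4/3)c = 0, y ≠ 0} do not intersect. -/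
set_option maxHeartbeats 1000000

/-- For (a,b,c) in the region R (0 < b, 0 ≤ c < b^{3/2}/√6, and z₀ < a < z₊ where
z₋ < z₀ < z₊ are the three real roots of z³ − (b/2)z + c/3 = 0), the hyperbola
Γ = {x + iy : y² − 3x² + 3a² = 0, y ≠ 0} and the curve
𝒞 = {x + iy : 4x³ − 4xy² − 2bx + (4/3)c = 0, y ≠ 0} do not intersect. -/
theorem stmt_7 (a b c zm z0 zp : ℝ)
    (hb : 0 < b) (hc0 : 0 ≤ c) (hc : c < b ^ ((3:ℝ)/2) / Real.sqrt 6)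
    (hm : zm^3 - (b/2)*zm + c/3 = 0) (h0 : z0^3 - (b/2)*z0 + c/3 = 0)
    (hp : zp^3 - (b/2)*zp + c/3 = 0)
    (hord1 : zm < z0) (hord2 : z0 < zp)
    (ha1 : z0 < a) (ha2 : a < zp) :
    ¬ ∃ x y : ℝ, y ≠ 0 ∧ y^2 - 3*x^2 + 3*a^2 = 0 ∧
      4*x^3 - 4*x*y^2 - 2*b*x + (4/3)*c = 0 := by
  rintro ⟨x, y, hy, h1, h2⟩
  -- elementary symmetric function identities for the cubic
  have hne1 : z0 - zm ≠ 0 := sub_ne_zero.2 (ne_of_gt hord1)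
  have hne2 : zp - z0 ≠ 0 := sub_ne_zero.2 (ne_of_gt hord2)
  have hne3 : zp - zm ≠ 0 := sub_ne_zero.2 (ne_of_gt (hord1.trans hord2))
  have e1 : z0^2 + z0*zm + zm^2 = b/2 := by
    have key : (z0 - zm) * (z0^2 + z0*zm + zm^2 - b/2) = 0 := by
      linear_combination h0 - hm
    have := (mul_eq_zero.1 key).resolve_left hne1
    linarith
  have e2 : zp^2 + zp*z0 + z0^2 = b/2 := by
    have key : (zp - z0) * (zp^2 + zp*z0 + z0^2 - b/2) = 0 := by
      linear_combination hp - h0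
    have := (mul_eq_zero.1 key).resolve_left hne2
    linarith
  have hs1 : zm + z0 + zp = 0 := by
    have key : (zp - zm) * (zm + z0 + zp) = 0 := by linear_combination e2 - e1
    exact (mul_eq_zero.1 key).resolve_left hne3
  have hσ2 : zm*z0 + zm*zp + z0*zp = -(b/2) := by
    linear_combination (zm + z0)*hs1 - e1
  have hσ3 : zm*z0*zp = -(c/3) := by
    linear_combination (zm*z0)*hs1 + h0 - z0*e1
  -- factorisation of the cubic
  have hg : ∀ s : ℝ, s^3 - (b/2)*s + c/3 = (s - zm)*(s - z0)*(s - zp) := by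
    intro s
    linear_combination s^2*hs1 - s*hσ2 + hσ3
  obtain ⟨t, htdef⟩ : ∃ t : ℝ, t = |a| := ⟨|a|, rfl⟩
  have ht0 : 0 ≤ t := htdef ▸ abs_nonneg a
  have ha2t : a^2 = t^2 := by rw [htdef, sq_abs]
  -- z0 < t, zm < t, t < zp
  have hzm0 : zm < t ∧ z0 < t ∧ t < zp := by
    rcases abs_cases a with ⟨h, h'⟩ | ⟨h, h'⟩ <;> rw [htdef, h]
    · exact ⟨by linarith, by linarith, by linarith⟩
    · refine ⟨by linarith, by linarith, ?_⟩
      linarith [hs1]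
  obtain ⟨hzm, hz0, hzp⟩ := hzm0
  -- g(t) < 0
  have hgt : t^3 - (b/2)*t + c/3 < 0 := by
    rw [hg t]
    have h1' : 0 < (t - zm) * (t - z0) := mul_pos (by linarith) (by linarith)
    exact mul_neg_of_pos_of_neg h1' (by linarith)
  -- the cubic satisfied by x
  have hf : x^3 - (3*a^2/2 - b/4)*x - c/6 = 0 := by
    linear_combination (-1/8)*h2 - (x/2)*h1
  have hy2 : 0 < y^2 := by positivity
  have hx2 : t^2 < x^2 := by linarith [hy2, h1, ha2t]
  -- f(t) > 0, f(-t) < 0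
  have ft : 0 < t^3 - (3*a^2/2 - b/4)*t - c/6 := by
    have key : t^3 - (3*a^2/2 - b/4)*t - c/6 = -(1/2)*(t^3 - (b/2)*t + c/3) := by
      linear_combination (-3*t/2)*ha2t
    rw [key]; linarith
  have fmt : (-t)^3 - (3*a^2/2 - b/4)*(-t) - c/6 < 0 := by
    have key : (-t)^3 - (3*a^2/2 - b/4)*(-t) - c/6
        = (1/2)*(t^3 - (b/2)*t + c/3) - c/3 := by
      linear_combination (3*t/2)*ha2t
    rw [key]; linarith
  -- x > t or x < -t
  have htx : t < |x| := by
    have h' : t^2 < |x|^2 := lt_of_lt_of_eq hx2 (sq_abs x).symm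
    exact lt_of_pow_lt_pow_left₀ 2 (abs_nonneg x) h'
  rcases abs_cases x with ⟨hax, _⟩ | ⟨hax, _⟩
  · -- x > t
    have hxt : t < x := by linarith
    have hmul : t*t ≤ x*t := mul_le_mul_of_nonneg_right hxt.le ht0
    have hfac : 0 < x^2 + x*t + t^2 - (3*a^2/2 - b/4) := by nlinarith only [hx2, hmul, ha2t, hb, sq_nonneg t]
    have hid : x^3 - (3*a^2/2 - b/4)*x - c/6
        = (t^3 - (3*a^2/2 - b/4)*t - c/6) + (x - t)*(x^2 + x*t + t^2 - (3*a^2/2 - b/4)) := by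
      ring
    have hprod : 0 < (x - t)*(x^2 + x*t + t^2 - (3*a^2/2 - b/4)) :=
      mul_pos (by linarith) hfac
    linarith [hid ▸ hf]
  · -- x < -t
    have hxt : x < -t := by linarith
    have hmul : t*t ≤ (-x)*t := mul_le_mul_of_nonneg_right (by linarith) ht0
    have hfac : 0 < x^2 - x*t + t^2 - (3*a^2/2 - b/4) := by nlinarith only [hx2, hmul, ha2t, hb, sq_nonneg t]
    have hid : x^3 - (3*a^2/2 - b/4)*x - c/6
        = ((-t)^3 - (3*a^2/2 - b/4)*(-t) - c/6) + (x + t)*(x^2 - x*t + t^2 - (3*a^2/2 - b/4)) := by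
      ring
    have hprod : (x + t)*(x^2 - x*t + t^2 - (3*a^2/2 - b/4)) < 0 :=
      mul_neg_of_neg_of_pos (by linarith) hfac
    linarith [hid ▸ hf]
end

section
/- Let D ⊆ ℝ³ be an open set with coordinates (η, μ, ν), and let ς : D → ℝ be a function such that at every point of D one has 5η − 3ς ≠ 0, P(ς; η, μ, ν) = 0, and ∂P/∂ς(ς; η, μ, ν) ≠ 0. Suppose (a_k)_{k≥0} and (b_k)_{k≥0} are sequences of functions on D, each infinitely differentiable in the variable ν (with ' denoting ∂/∂ν), such that: (i) a₀ = ς and b₀ = −2μ/(5η − 3ς) on D; (ii) a₁ = a₃ = b₁ = b₃ = 0 on D; and (iii) for every integer N ≥ 4 the recursions 0 = Σ_{ℓ=0}^{N} (18 b_ℓ b_{N−ℓ} − 15η a_ℓ a_{N−ℓ} + 6 Σ_{j=0}^{ℓ} a_{N−ℓ} a_{ℓ−j} a_j) − (9/2) Σ_{ℓ=0}^{N−2} (2 a_ℓ'' a_{N−ℓ−2} − a_ℓ' a_{N−ℓ−2}') + 5η a_{N−2}'' + a_{N−4}'''' and 0 = −3 Σ_{k=0}^{N} b_k a_{N−k}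 + 5η b_N + b_{N−2}'' hold on D. Then a_N = 0 and b_N = 0 on D for every odd N ≥ 1. (Consequently, the formal power series solution u = Σ a_k ħ^k, v = Σ b_k ħ^k of the rescaled string equation contains only even powers of ħ.) -/
private lemma derivZero {U : Set ℝ} (hU : IsOpen U) {f : ℝ → ℝ} (h : ∀ x ∈ U, f x = 0) :
    ∀ x ∈ U, deriv f x = 0 := by
  intro x hx
  have hEq : f =ᶠ[nhds x] fun _ => (0:ℝ) := Filter.eventuallyEq_of_mem (hU.mem_nhds hx) h
  rw [hEq.deriv_eq, deriv_const]

private lemma iterDerivZero {U : Set ℝ} (hU : IsOpen U) {f : ℝ → ℝ} (h : ∀ x ∈ U, f x = 0) :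
    ∀ n, ∀ x ∈ U, deriv^[n] f x = 0 := by
  intro n
  induction n with
  | zero => exact h
  | succ k ih =>
      intro x hx
      rw [Function.iterate_succ_apply']
      exact derivZero hU ih x hx

private lemma sum_ends {M : ℕ} (hM : 1 ≤ M) (f : ℕ → ℝ)
    (h : ∀ ℓ, 0 < ℓ → ℓ < M → f ℓ = 0) :
    ∑ ℓ ∈ Finset.range (M+1), f ℓ = f 0 + f M := by
  rw [Finset.sum_range_succ]
  congr 1
  apply Finset.sum_eq_single_of_mem 0 (Finset.mem_range.mpr (by omega))
  intro ℓ hℓ hne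
  exact h ℓ (Nat.pos_of_ne_zero hne) (Finset.mem_range.mp hℓ)

/-- Its ς-derivative ∂P/∂ς = (3/2)ς² − (5/2)ης + 36μ²/(5η − 3ς)³. -/
noncomputable def PquinticDς (ς η μ : ℝ) : ℝ :=
  (3/2)*ς^2 - (5/2)*η*ς + 36*μ^2/(5*η - 3*ς)^3

/-- If D ⊆ ℝ³ is open, ς is a simple root of the quintic P on D, and the coefficient
functions (a_k), (b_k) of a formal power series solution of the rescaled (3,4) string
equation are smooth in ν, satisfy the leading-order values a₀ = ς, b₀ = −2μ/(5η − 3ς),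
vanish at orders 1 and 3, and satisfy the order-ħ^N recursions for all N ≥ 4, then
a_N = b_N = 0 on D for every odd N: the topological expansion contains only even powers
of ħ. -/
theorem stmt_19
    (D : Set (ℝ × ℝ × ℝ)) (hD : IsOpen D)
    (ς : ℝ × ℝ × ℝ → ℝ)
    (hς : ∀ p ∈ D, 5*p.1 - 3*ς p ≠ 0 ∧ Pquintic (ς p) p.1 p.2.1 p.2.2 = 0 ∧
      PquinticDς (ς p) p.1 p.2.1 ≠ 0)
    (a b : ℕ → ℝ → ℝ → ℝ → ℝ)
    (hsmooth : ∀ k : ℕ, ∀ η μ ν : ℝ, (η, μ, ν) ∈ D →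
      ContDiffAt ℝ (⊤ : ℕ∞) (a k η μ) ν ∧ ContDiffAt ℝ (⊤ : ℕ∞) (b k η μ) ν)
    (h0 : ∀ η μ ν : ℝ, (η, μ, ν) ∈ D →
      a 0 η μ ν = ς (η, μ, ν) ∧ b 0 η μ ν = -2*μ/(5*η - 3*ς (η, μ, ν)))
    (h13 : ∀ η μ ν : ℝ, (η, μ, ν) ∈ D →
      a 1 η μ ν = 0 ∧ a 3 η μ ν = 0 ∧ b 1 η μ ν = 0 ∧ b 3 η μ ν = 0)
    (hrec : ∀ N : ℕ, 4 ≤ N → ∀ η μ ν : ℝ, (η, μ, ν) ∈ D →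
      (0 = (∑ ℓ ∈ Finset.range (N+1),
              (18 * b ℓ η μ ν * b (N-ℓ) η μ ν - 15*η * (a ℓ η μ ν) * (a (N-ℓ) η μ ν)
                + 6 * ∑ j ∈ Finset.range (ℓ+1),
                    a (N-ℓ) η μ ν * a (ℓ-j) η μ ν * a j η μ ν))
          - (9/2) * (∑ ℓ ∈ Finset.range (N-1),
              (2 * deriv (deriv (a ℓ η μ)) ν * a (N-ℓ-2) η μ ν
                - deriv (a ℓ η μ) ν * deriv (a (N-ℓ-2) η μ) ν))
          + 5*η * deriv (deriv (a (N-2) η μ)) ν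
          + deriv^[4] (a (N-4) η μ) ν) ∧
      (0 = -3 * (∑ k ∈ Finset.range (N+1), b k η μ ν * a (N-k) η μ ν)
          + 5*η * b N η μ ν + deriv (deriv (b (N-2) η μ)) ν)) :
    ∀ N : ℕ, Odd N → ∀ η μ ν : ℝ, (η, μ, ν) ∈ D →
      a N η μ ν = 0 ∧ b N η μ ν = 0 := by
  intro N
  induction N using Nat.strong_induction_on with
  | _ N IH =>
    intro hodd η μ ν hmem
    rcases lt_or_ge N 5 with h5 | h5
    · interval_cases N
      · exact absurd hodd (by decide)
      · exact ⟨(h13 η μ ν hmem).1, (h13 η μ ν hmem).2.2.1⟩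
      · exact absurd hodd (by decide)
      · exact ⟨(h13 η μ ν hmem).2.1, (h13 η μ ν hmem).2.2.2⟩
      · exact absurd hodd (by decide)
    · -- main inductive step, N odd, N ≥ 5
      obtain ⟨hrec1, hrec2⟩ := hrec N (by omega) η μ ν hmem
      -- the open slice
      have hUopen : IsOpen {x : ℝ | (η, μ, x) ∈ D} :=
        hD.preimage (by fun_prop)
      have hνU : ν ∈ {x : ℝ | (η, μ, x) ∈ D} := hmem
      -- IH : vanishing of odd lower-order coefficients on the slice
      have hva : ∀ m, Odd m → m < N → ∀ x ∈ {x : ℝ | (η, μ, x) ∈ D}, a m η μ x = 0 :=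
        fun m hm hlt x hx => (IH m hlt hm η μ x hx).1
      have hvb : ∀ m, Odd m → m < N → ∀ x ∈ {x : ℝ | (η, μ, x) ∈ D}, b m η μ x = 0 :=
        fun m hm hlt x hx => (IH m hlt hm η μ x hx).2
      have hda : ∀ m, Odd m → m < N → ∀ x ∈ {x : ℝ | (η, μ, x) ∈ D},
          deriv (a m η μ) x = 0 :=
        fun m hm hlt => derivZero hUopen (hva m hm hlt)
      have hdda : ∀ m, Odd m → m < N → ∀ x ∈ {x : ℝ | (η, μ, x) ∈ D},
          deriv (deriv (a m η μ)) x = 0 :=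
        fun m hm hlt => derivZero hUopen (hda m hm hlt)
      have hddb : ∀ m, Odd m → m < N → ∀ x ∈ {x : ℝ | (η, μ, x) ∈ D},
          deriv (deriv (b m η μ)) x = 0 :=
        fun m hm hlt => derivZero hUopen (derivZero hUopen (hvb m hm hlt))
      have hodd2 : Odd (N - 2) := Nat.Odd.sub_even (by omega) hodd (by decide)
      have hodd4 : Odd (N - 4) := Nat.Odd.sub_even (by omega) hodd (by decide)
      -- middle terms of the main sum in equation 1 vanish
      have hmid1 : ∀ ℓ, 0 < ℓ → ℓ < N →
          (18 * b ℓ η μ ν * b (N-ℓ) η μ ν - 15*η * (a ℓ η μ ν) * (a (N-ℓ) η μ ν)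
            + 6 * ∑ j ∈ Finset.range (ℓ+1),
                a (N-ℓ) η μ ν * a (ℓ-j) η μ ν * a j η μ ν) = 0 := by
        intro ℓ hℓpos hℓlt
        rcases Nat.even_or_odd ℓ with hev | hod
        · have hodNl : Odd (N - ℓ) := Nat.Odd.sub_even (by omega) hodd hev
          have ha' := hva (N-ℓ) hodNl (by omega) ν hνU
          have hb' := hvb (N-ℓ) hodNl (by omega) ν hνU
          have hin : (∑ j ∈ Finset.range (ℓ+1),
              a (N-ℓ) η μ ν * a (ℓ-j) η μ ν * a j η μ ν) = 0 :=
            Finset.sum_eq_zero (fun j _ => by rw [ha']; ring)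
          rw [hin, ha', hb']; ring
        · have ha' := hva ℓ hod (by omega) ν hνU
          have hb' := hvb ℓ hod (by omega) ν hνU
          have hin : (∑ j ∈ Finset.range (ℓ+1),
              a (N-ℓ) η μ ν * a (ℓ-j) η μ ν * a j η μ ν) = 0 := by
            apply Finset.sum_eq_zero
            intro j hj
            have hj' : j ≤ ℓ := by have := Finset.mem_range.mp hj; omega
            rcases Nat.even_or_odd j with hje | hjo
            · have hodlj : Odd (ℓ - j) := Nat.Odd.sub_even hj' hod hje
              rw [hva (ℓ-j) hodlj (by omega) ν hνU]; ring
            · rw [hva j hjo (by omega) ν hνU]; ring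
          rw [hin, ha', hb']; ring
      -- middle terms of the cubic sum (at ℓ = N) vanish
      have hmid1b : ∀ j, 0 < j → j < N →
          a 0 η μ ν * a (N-j) η μ ν * a j η μ ν = 0 := by
        intro j hjpos hjlt
        rcases Nat.even_or_odd j with hje | hjo
        · have : Odd (N - j) := Nat.Odd.sub_even (by omega) hodd hje
          rw [hva (N-j) this (by omega) ν hνU]; ring
        · rw [hva j hjo (by omega) ν hνU]; ring
      -- the derivative sum in equation 1 vanishes
      have hsum2 : (∑ ℓ ∈ Finset.range (N-1),
              (2 * deriv (deriv (a ℓ η μ)) ν * a (N-ℓ-2) η μ ν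
                - deriv (a ℓ η μ) ν * deriv (a (N-ℓ-2) η μ) ν)) = 0 := by
        apply Finset.sum_eq_zero
        intro ℓ hℓ
        have hℓ' : ℓ < N - 1 := Finset.mem_range.mp hℓ
        rcases Nat.even_or_odd ℓ with hev | hod
        · have hodm : Odd (N - ℓ - 2) := by
            have h' : N - ℓ - 2 = (N - 2) - ℓ := by omega
            rw [h']
            exact Nat.Odd.sub_even (by omega) hodd2 hev
          rw [hva (N-ℓ-2) hodm (by omega) ν hνU, hda (N-ℓ-2) hodm (by omega) ν hνU]
          ring
        · rw [hdda ℓ hod (by omega) ν hνU, hda ℓ hod (by omega) ν hνU]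
          ring
      have hd2 : deriv (deriv (a (N-2) η μ)) ν = 0 := hdda (N-2) hodd2 (by omega) ν hνU
      have hd4 : deriv^[4] (a (N-4) η μ) ν = 0 :=
        iterDerivZero hUopen (hva (N-4) hodd4 (by omega)) 4 ν hνU
      rw [sum_ends (by omega) _ hmid1, hsum2, hd2, hd4] at hrec1
      simp only [zero_add, Nat.sub_zero, Nat.sub_self, Finset.sum_range_one] at hrec1
      rw [sum_ends (by omega) _ hmid1b] at hrec1
      simp only [Nat.sub_zero, Nat.sub_self] at hrec1
      -- simplify equation 2
      have hmid3 : ∀ k, 0 < k → k < N → b k η μ ν * a (N-k) η μ ν = 0 := by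
        intro k hkpos hklt
        rcases Nat.even_or_odd k with hev | hod
        · have : Odd (N - k) := Nat.Odd.sub_even (by omega) hodd hev
          rw [hva (N-k) this (by omega) ν hνU]; ring
        · rw [hvb k hod (by omega) ν hνU]; ring
      have hd2b : deriv (deriv (b (N-2) η μ)) ν = 0 := hddb (N-2) hodd2 (by omega) ν hνU
      rw [sum_ends (by omega) _ hmid3, hd2b] at hrec2
      simp only [Nat.sub_zero, Nat.sub_self] at hrec2
      -- the 2×2 linear system
      obtain ⟨ha0, hb0⟩ := h0 η μ ν hmem
      obtain ⟨hne, _, hPD⟩ := hς (η, μ, ν) hmem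
      set s := ς (η, μ, ν) with hs
      set A := a N η μ ν with hA
      set B := b N η μ ν with hB
      set β := b 0 η μ ν with hβ
      rw [ha0] at hrec1 hrec2
      have hne' : 5*η - 3*s ≠ 0 := hne
      have hPD' : PquinticDς s η μ ≠ 0 := hPD
      have hb0e : (5*η - 3*s) * β = -2*μ := by
        rw [hb0]; field_simp
      have hE2' : (5*η - 3*s) * B = 3 * β * A := by linear_combination -hrec2
      have hE1' : 36 * β * B = (30*η*s - 18*s^2) * A := by linear_combination -hrec1
      have hcomb : ((5*η - 3*s)*(30*η*s - 18*s^2) - 108*β^2) * A = 0 := by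
        linear_combination (36*β) * hE2' - (5*η - 3*s) * hE1'
      have hP3 : (5*η - 3*s)^3 * PquinticDς s η μ
          = (5*η - 3*s)^3 * ((3/2)*s^2 - (5/2)*η*s) + 36*μ^2 := by
        unfold PquinticDς
        field_simp
      have hfin : (5*η - 3*s)^3 * PquinticDς s η μ * A = 0 := by
        linear_combination A * hP3 - (1/12)*(5*η - 3*s)^2 * hcomb
          - 9*((5*η - 3*s)*β - 2*μ) * A * hb0e
      have hAz : A = 0 := by
        rcases mul_eq_zero.mp hfin with h | h
        · rcases mul_eq_zero.mp h with h' | h'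
          · exact absurd h' (pow_ne_zero _ hne')
          · exact absurd h' hPD'
        · exact h
      have hBz : B = 0 := by
        have h : (5*η - 3*s) * B = 0 := by
          rw [hAz] at hE2'; linear_combination hE2'
        rcases mul_eq_zero.mp h with h' | h'
        · exact absurd h' hne'
        · exact h'
      exact ⟨hAz, hBz⟩
end
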